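/- arXiv:2602.06467 — 10 statements merged into one kernel-verified Lean document; each statement's English description precedes it below -/
import Mathlib

section
/- Every code that is k-recoverable is also k-preserving. Formally: let γ : {0,...,M-1} → {0,1}^n be a code and k ∈ ℕ; if γ is k-recoverable, then γ is k-preserving. -/
/-- Resolution of a ternary word (`none` is the metastable value `M`). -/
def res {n : ℕ} (x : Fin n → Option Bool) : Set (Fin n → Bool) :=
  {y | ∀ j : Fin n, ∀ b : Bool, x j = some b → y j = b}

open Classical in
/-- Extended codeword: pointwise superposition of all codewords `γ a`, `a ∈ I`. -/
noncomputable def extCW {M n : ℕ} (γ : Fin M → Fin n → Bool) (I : Set (Fin M)) :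
    Fin n → Option Bool :=
  fun j =>
    if ∀ a ∈ I, γ a j = true then some true
    else if ∀ a ∈ I, γ a j = false then some false
    else none

/-- The interval `⟨i, i+p⟩ = {i, ..., i+p}` inside `{0, ..., M-1}`. -/
def intvl (M i p : ℕ) : Set (Fin M) := {a : Fin M | i ≤ a.val ∧ a.val ≤ i + p}

/-- A code is `k`-preserving if for every interval `⟨i,i+p⟩` with `p ≤ k`,
the codewords in the resolution of the extended codeword are exactly the
codewords of the interval. -/
def Preserving {M n : ℕ} (γ : Fin M → Fin n → Bool) (k : ℕ) : Prop :=
  ∀ i p : ℕ, p ≤ k → i + p < M →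
    Set.range γ ∩ res (extCW γ (intvl M i p)) = γ '' (intvl M i p)

/-- A code is `k`-recoverable if some extension `dec` of the decoding function
maps every resolution of the extended codeword of an interval of imprecision
at most `k` back into that interval. -/
def Recoverable {M n : ℕ} (γ : Fin M → Fin n → Bool) (k : ℕ) : Prop :=
  ∃ dec : (Fin n → Bool) → Fin M,
    (∀ v : Fin M, dec (γ v) = v) ∧
    ∀ i p : ℕ, p ≤ k → i + p < M →
      ∀ y ∈ res (extCW γ (intvl M i p)), dec y ∈ intvl M i p

/-- Every `k`-recoverable code is `k`-preserving. -/
theorem recoverable_imp_preserving {M n k : ℕ} (γ : Fin M → Fin n → Bool)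
    (hinj : Function.Injective γ) (hrec : Recoverable γ k) :
    Preserving γ k := by
  obtain ⟨dec, hdec, hrec⟩ := hrec
  intro i p hp hM
  ext y
  constructor
  · rintro ⟨⟨v, rfl⟩, hres⟩
    have hv := hrec i p hp hM (γ v) hres
    have : dec (γ v) = v := hdec v
    exact ⟨v, by rwa [this] at hv, rfl⟩
  · rintro ⟨a, ha, rfl⟩
    refine ⟨⟨a, rfl⟩, ?_⟩
    intro j b hb
    unfold extCW at hb
    split_ifs at hb with h1 h2
    · simp only [Option.some.injEq] at hb; subst hb; exact h1 a ha
    · simp only [Option.some.injEq] at hb; subst hb; exact h2 a ha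
end

section
/- Any code with optimal redundancy 1 is at most 1-preserving and at most 1-recoverable. Formally: for n ≥ 2, no bijective code γ : {0,...,2^n-1} → {0,1}^n is 2-preserving, and no such bijective code is 2-recoverable. -/
/-- Pigeonhole: no injection of `Bool × Bool` into `{0,1,2}`. -/
lemma no_four_in_three {M : ℕ} (v : Bool × Bool → Fin M)
    (hinj : Function.Injective v) (h : ∀ p, (v p).val ≤ 2) : False := by
  let g : Bool × Bool → Fin 3 := fun p => ⟨(v p).val, Nat.lt_succ_of_le (h p)⟩
  have ginj : Function.Injective g := by
    intro p q hpq
    exact hinj (Fin.ext (by simpa [g, Fin.ext_iff] using hpq))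
  have := Fintype.card_le_of_injective g ginj
  simp at this

/-- No bijective (redundancy-1) code on `n ≥ 2` bits is `2`-preserving
or `2`-recoverable. -/
theorem bijective_code_at_most_one_preserving_recoverable (n : ℕ) (hn : 2 ≤ n)
    (γ : Fin (2^n) → Fin n → Bool) (hbij : Function.Bijective γ) :
    ¬ Preserving γ 2 ∧ ¬ Recoverable γ 2 := by
  classical
  have h4 : 4 ≤ 2 ^ n := by
    calc (4 : ℕ) = 2 ^ 2 := rfl
    _ ≤ 2 ^ n := Nat.pow_le_pow_right (by norm_num) hn
  set I : Set (Fin (2 ^ n)) := intvl (2 ^ n) 0 2 with hIdef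
  set a0 : Fin (2 ^ n) := ⟨0, by omega⟩
  set a1 : Fin (2 ^ n) := ⟨1, by omega⟩
  set a2 : Fin (2 ^ n) := ⟨2, by omega⟩
  have ha0 : a0 ∈ I := by simp [hIdef, intvl, a0]
  have ha1 : a1 ∈ I := by simp [hIdef, intvl, a1]
  have ha2 : a2 ∈ I := by simp [hIdef, intvl, a2]
  set x : Fin n → Option Bool := extCW γ I with hxdef
  -- a disagreement between two codewords in I forces metastability
  have hnone : ∀ (a a' : Fin (2 ^ n)), a ∈ I → a' ∈ I → ∀ j : Fin n,
      γ a j ≠ γ a' j → x j = none := by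
    intro a a' ha ha' j hne
    simp only [hxdef, extCW]
    split_ifs with h1 h2
    · exact absurd ((h1 a ha).trans (h1 a' ha').symm) hne
    · exact absurd ((h2 a ha).trans (h2 a' ha').symm) hne
    · rfl
  -- two distinct metastable positions
  have h01 : γ a0 ≠ γ a1 := fun h => by
    have := hbij.1 h; simp [a0, a1, Fin.ext_iff] at this
  obtain ⟨j1, hj1⟩ := Function.ne_iff.mp h01
  have hxj1 : x j1 = none := hnone a0 a1 ha0 ha1 j1 hj1
  obtain ⟨j2, hj2ne, hxj2⟩ : ∃ j2 : Fin n, j2 ≠ j1 ∧ x j2 = none := by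
    by_cases hc : γ a2 j1 = γ a0 j1
    · have h02 : γ a0 ≠ γ a2 := fun h => by
        have := hbij.1 h; simp [a0, a2, Fin.ext_iff] at this
      obtain ⟨j2, hj2⟩ := Function.ne_iff.mp h02
      refine ⟨j2, fun h => ?_, hnone a0 a2 ha0 ha2 j2 hj2⟩
      subst h; exact hj2 hc.symm
    · have hc1 : γ a2 j1 = γ a1 j1 := by
        rcases Bool.eq_false_or_eq_true (γ a2 j1) with h | h <;>
        rcases Bool.eq_false_or_eq_true (γ a0 j1) with h' | h' <;>
        rcases Bool.eq_false_or_eq_true (γ a1 j1) with h'' | h'' <;>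
          simp_all
      have h12 : γ a1 ≠ γ a2 := fun h => by
        have := hbij.1 h; simp [a1, a2, Fin.ext_iff] at this
      obtain ⟨j2, hj2⟩ := Function.ne_iff.mp h12
      refine ⟨j2, fun h => ?_, hnone a1 a2 ha1 ha2 j2 hj2⟩
      subst h; exact hj2 hc1.symm
  -- base element of the resolution
  have hy0 : γ a0 ∈ res x := by
    intro j b hb
    simp only [hxdef, extCW] at hb
    split_ifs at hb with h1 h2
    · simpa [← Option.some_inj.mp hb] using h1 a0 ha0
    · simpa [← Option.some_inj.mp hb] using h2 a0 ha0
  -- four elements of the resolution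
  set y : Bool × Bool → (Fin n → Bool) :=
    fun p => Function.update (Function.update (γ a0) j1 p.1) j2 p.2 with hydef
  have hyres : ∀ p, y p ∈ res x := by
    intro p j b hb
    have hne2 : j ≠ j2 := fun h => by rw [h, hxj2] at hb; cases hb
    have hne1 : j ≠ j1 := fun h => by rw [h, hxj1] at hb; cases hb
    simp only [hydef, Function.update_of_ne hne2, Function.update_of_ne hne1]
    exact hy0 j b hb
  have hyval1 : ∀ p, y p j1 = p.1 := by
    intro p
    simp [hydef, Function.update_of_ne (Ne.symm hj2ne)]
  have hyval2 : ∀ p, y p j2 = p.2 := by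
    intro p; simp [hydef]
  have hyinj : Function.Injective y := by
    intro p q h
    have h1 := congrFun h j1
    have h2 := congrFun h j2
    rw [hyval1, hyval1] at h1
    rw [hyval2, hyval2] at h2
    exact Prod.ext h1 h2
  constructor
  · intro hP
    have hset := hP 0 2 le_rfl (by omega)
    have hmem : ∀ p, y p ∈ γ '' I := by
      intro p
      rw [← hIdef] at hset
      rw [← hset]
      exact ⟨hbij.2.range_eq ▸ Set.mem_univ _, hyres p⟩
    choose v hvI hvγ using hmem
    have hvinj : Function.Injective v := by
      intro p q h
      exact hyinj (by rw [← hvγ p, ← hvγ q, h])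
    exact no_four_in_three v hvinj (fun p => (hvI p).2)
  · rintro ⟨dec, hdec, hrec⟩
    have hmem : ∀ p, dec (y p) ∈ I := by
      intro p
      have := hrec 0 2 le_rfl (by omega) (y p) (hyres p)
      rwa [← hIdef] at this
    set v : Bool × Bool → Fin (2 ^ n) := fun p => dec (y p) with hvdef
    have hvinj : Function.Injective v := by
      intro p q h
      obtain ⟨wp, hwp⟩ := hbij.2 (y p)
      obtain ⟨wq, hwq⟩ := hbij.2 (y q)
      have : wp = wq := by
        have h1 : v p = wp := by rw [hvdef]; simp only; rw [← hwp, hdec]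
        have h2 : v q = wq := by rw [hvdef]; simp only; rw [← hwq, hdec]
        rw [← h1, ← h2, h]
      exact hyinj (by rw [← hwp, ← hwq, this])
    exact no_four_in_three v hvinj (fun p => (hmem p).2)
end

section
/- Let γ : {0,...,M-1} → {0,1}^n be a k-preserving code. For every p ≤ k and every i with i + p ≤ M - 1, the extended codeword ⊛{γ(i), γ(i+1), ..., γ(i+p)} has at least p positions equal to M. -/
/-!
Extending the interval `⟨i, i+q⟩` to `⟨i, i+q+1⟩` can only turn stable positions of the
extended codeword into metastable ones. If no new metastable position appeared, the two
extended codewords would coincide, hence so would their resolutions, and by preservation the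
two intervals would have the same image under `γ`; injectivity rules this out. So every
extension step adds a metastable position, and `p` steps add at least `p`.
-/

def metastableSet {M n : ℕ} (γ : Fin M → Fin n → Bool) (I : Set (Fin M)) : Set (Fin n) :=
  {j | extCW γ I j = none}

section ExtendedCodeword

variable {M n : ℕ} (γ : Fin M → Fin n → Bool) {I I' : Set (Fin M)} {j : Fin n}

lemma extCW_eq_none_iff :
    extCW γ I j = none ↔ (∃ a ∈ I, γ a j = true) ∧ ∃ a ∈ I, γ a j = false := by
  unfold extCW
  split_ifs <;> simp_all

lemma extCW_eq_some_iff (hI : I.Nonempty) {b : Bool} :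
    extCW γ I j = some b ↔ ∀ a ∈ I, γ a j = b := by
  unfold extCW
  split_ifs <;> cases b <;> simp_all [Set.Nonempty]

lemma metastableSet_mono (h : I ⊆ I') : metastableSet γ I ⊆ metastableSet γ I' := by
  intro j hj
  simp only [metastableSet, Set.mem_ofPred_eq, extCW_eq_none_iff] at hj ⊢
  obtain ⟨⟨a, ha, hat⟩, ⟨b, hb, hbf⟩⟩ := hj
  exact ⟨⟨a, h ha, hat⟩, ⟨b, h hb, hbf⟩⟩

lemma extCW_eq_of_metastableSet_eq (hI : I.Nonempty) (h : I ⊆ I')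
    (heq : metastableSet γ I = metastableSet γ I') : extCW γ I = extCW γ I' := by
  funext j
  cases h' : extCW γ I' j with
  | none => exact (heq ▸ h' : j ∈ metastableSet γ I)
  | some b =>
    exact (extCW_eq_some_iff γ hI).2 fun a ha => (extCW_eq_some_iff γ (hI.mono h)).1 h' a (h ha)

end ExtendedCodeword

section Interval

variable {M i p : ℕ}

lemma intvl_subset_succ : intvl M i p ⊆ intvl M i (p + 1) :=
  fun _ ⟨h₁, h₂⟩ => ⟨h₁, by omega⟩

lemma intvl_nonempty (h : i < M) : (intvl M i p).Nonempty :=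
  ⟨⟨i, h⟩, le_rfl, Nat.le_add_right i p⟩

lemma right_end_mem_intvl_succ (h : i + (p + 1) < M) :
    (⟨i + (p + 1), h⟩ : Fin M) ∈ intvl M i (p + 1) :=
  ⟨Nat.le_add_right i _, le_rfl⟩

lemma right_end_not_mem_intvl (h : i + (p + 1) < M) :
    (⟨i + (p + 1), h⟩ : Fin M) ∉ intvl M i p :=
  fun ⟨_, h₂⟩ => by simp at h₂

end Interval

lemma Preserving.metastableSet_ssubset_succ {M n k : ℕ} {γ : Fin M → Fin n → Bool}
    (hinj : Function.Injective γ) (hpres : Preserving γ k) {i p : ℕ} (hp : p + 1 ≤ k)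
    (hip : i + (p + 1) < M) :
    metastableSet γ (intvl M i p) ⊂ metastableSet γ (intvl M i (p + 1)) := by
  refine (metastableSet_mono γ intvl_subset_succ).ssubset_of_ne fun heq => ?_
  have hext := extCW_eq_of_metastableSet_eq γ (intvl_nonempty (by omega)) intvl_subset_succ heq
  have himage : γ '' intvl M i p = γ '' intvl M i (p + 1) := by
    rw [← hpres i p (by omega) (by omega), ← hpres i (p + 1) hp hip, hext]
  have hnew := himage ▸ Set.mem_image_of_mem γ (right_end_mem_intvl_succ hip)
  exact right_end_not_mem_intvl hip (hinj.mem_set_image.1 hnew)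

/-- For a `k`-preserving code, the extended codeword of an interval of
imprecision `p ≤ k` has at least `p` metastable (`none`) positions. -/
theorem preserving_ext_codeword_many_M {M n k : ℕ} (γ : Fin M → Fin n → Bool)
    (hinj : Function.Injective γ) (hpres : Preserving γ k)
    (i p : ℕ) (hp : p ≤ k) (hip : i + p < M) :
    p ≤ Set.ncard {j : Fin n | extCW γ (intvl M i p) j = none} := by
  change p ≤ (metastableSet γ (intvl M i p)).ncard
  induction p with
  | zero => exact Nat.zero_le _
  | succ p ih =>
    have hgrow := Set.ncard_lt_ncard (hpres.metastableSet_ssubset_succ hinj hp hip)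
      (Set.toFinite _)
    have hprev := ih (by omega) (by omega)
    omega
end

section
/- Recoverability requires redundancy: for k, n ∈ ℕ with k ≤ n, if a code γ : {0,...,M-1} → {0,1}^n is k-recoverable, then M ≤ 2^{n-k}·(k+1). -/
/- ### auxiliary definitions and lemmas -/

noncomputable def resFin {n : ℕ} (x : Fin n → Option Bool) : Finset (Fin n → Bool) :=
  Finset.univ.filter (fun y => ∀ j : Fin n, ∀ b : Bool, x j = some b → y j = b)

lemma mem_resFin {n : ℕ} {x : Fin n → Option Bool} {y : Fin n → Bool} :
    y ∈ resFin x ↔ y ∈ res x := by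
  simp [resFin, res]

noncomputable def mFin {n : ℕ} (x : Fin n → Option Bool) : Finset (Fin n) :=
  Finset.univ.filter (fun j => x j = none)

lemma card_resFin {n : ℕ} (x : Fin n → Option Bool) :
    2 ^ (mFin x).card ≤ (resFin x).card := by
  classical
  set Φ : ({j : Fin n // x j = none} → Bool) → (Fin n → Bool) :=
    fun f j => if h : x j = none then f ⟨j, h⟩ else (x j).iget with hΦ
  have hmaps : ∀ f, Φ f ∈ resFin x := by
    intro f
    rw [mem_resFin]
    intro j b hj
    simp only [hΦ]
    rw [dif_neg (by simp [hj])]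
    simp [hj]
  have hinj : Function.Injective Φ := by
    intro f g hfg
    funext ⟨j, h⟩
    have := congrFun hfg j
    simpa only [hΦ, dif_pos h] using this
  have hle : Fintype.card ({j : Fin n // x j = none} → Bool) ≤ (resFin x).card := by
    have := Finset.card_le_card_of_injOn (s := Finset.univ) (t := resFin x)
      Φ (fun f _ => hmaps f) (hinj.injOn)
    simpa using this
  calc 2 ^ (mFin x).card = Fintype.card ({j : Fin n // x j = none} → Bool) := by
        rw [Fintype.card_fun, Fintype.card_bool, Fintype.card_subtype]
        rfl
    _ ≤ _ := hle

lemma extCW_none_iff {M n : ℕ} (γ : Fin M → Fin n → Bool) (I : Set (Fin M)) (j : Fin n) :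
    extCW γ I j = none ↔ ¬(∀ a ∈ I, γ a j = true) ∧ ¬(∀ a ∈ I, γ a j = false) := by
  unfold extCW
  split_ifs with h1 h2 <;> simp_all

lemma extCW_some {M n : ℕ} {γ : Fin M → Fin n → Bool} {I : Set (Fin M)} {j : Fin n}
    {b : Bool} (h : extCW γ I j = some b) : ∀ a ∈ I, γ a j = b := by
  unfold extCW at h
  split_ifs at h with h1 h2 <;> simp_all

lemma mcount_ge {M n k : ℕ} {γ : Fin M → Fin n → Bool} (hrec : Recoverable γ k) :
    ∀ p, p ≤ k → ∀ i, i + p < M → p ≤ (mFin (extCW γ (intvl M i p))).card := by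
  obtain ⟨dec, hdec, hdecI⟩ := hrec
  intro p
  induction p with
  | zero => intro _ _ _; exact Nat.zero_le _
  | succ p ih =>
    intro hpk i hip
    have hpk' : p ≤ k := Nat.le_of_succ_le hpk
    have hip' : i + p < M := by omega
    have IH := ih hpk' i hip'
    set v : Fin M := ⟨i + p + 1, by omega⟩ with hv
    have hnot : γ v ∉ res (extCW γ (intvl M i p)) := by
      intro hmem
      have hm := hdecI i p hpk' hip' (γ v) hmem
      rw [hdec] at hm
      have h2 : (v : ℕ) ≤ i + p := hm.2
      have h3 : (v : ℕ) = i + p + 1 := rfl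
      omega
    have hex : ∃ j b, extCW γ (intvl M i p) j = some b ∧ γ v j ≠ b := by
      by_contra hcon
      push_neg at hcon
      exact hnot (fun j b hj => hcon j b hj)
    obtain ⟨j, b, hsome, hne⟩ := hex
    have hsub : mFin (extCW γ (intvl M i p)) ⊆ mFin (extCW γ (intvl M i (p+1))) := by
      intro j' hj'
      simp only [mFin, Finset.mem_filter, Finset.mem_univ, true_and] at hj' ⊢
      rw [extCW_none_iff] at hj' ⊢
      have hsubI : intvl M i p ⊆ intvl M i (p+1) := by
        intro a ha
        exact ⟨ha.1, le_trans ha.2 (by omega)⟩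
      exact ⟨fun h => hj'.1 (fun a ha => h a (hsubI ha)),
             fun h => hj'.2 (fun a ha => h a (hsubI ha))⟩
    have hjnotin : j ∉ mFin (extCW γ (intvl M i p)) := by
      simp [mFin, hsome]
    have ha0 : (⟨i, by omega⟩ : Fin M) ∈ intvl M i p := ⟨le_refl _, by simp⟩
    have hvval : (v : ℕ) = i + p + 1 := rfl
    have hvmem : v ∈ intvl M i (p+1) := ⟨by omega, by omega⟩
    have hjin : j ∈ mFin (extCW γ (intvl M i (p+1))) := by
      simp only [mFin, Finset.mem_filter, Finset.mem_univ, true_and]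
      rw [extCW_none_iff]
      have ha0b : γ ⟨i, by omega⟩ j = b := extCW_some hsome _ ha0
      have ha0' : (⟨i, by omega⟩ : Fin M) ∈ intvl M i (p+1) := ⟨le_refl _, by simp⟩
      cases b with
      | true =>
        refine ⟨fun h => hne (by simp [h v hvmem]), fun h => ?_⟩
        have := h _ ha0'; simp [ha0b] at this
      | false =>
        refine ⟨fun h => ?_, fun h => hne (by simp [h v hvmem])⟩
        have := h _ ha0'; simp [ha0b] at this
    have hss : mFin (extCW γ (intvl M i p)) ⊂ mFin (extCW γ (intvl M i (p+1))) :=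
      ⟨hsub, fun h => hjnotin (h hjin)⟩
    exact Nat.succ_le_of_lt (lt_of_le_of_lt IH (Finset.card_lt_card hss))

/-- Recoverability requires redundancy: a `k`-recoverable `n`-bit code has
domain size at most `2^(n-k) * (k+1)`. -/
theorem recoverable_domain_bound {M n k : ℕ} (hkn : k ≤ n)
    (γ : Fin M → Fin n → Bool) (hinj : Function.Injective γ)
    (hrec : Recoverable γ k) :
    M ≤ 2^(n-k) * (k+1) := by
  by_contra hM
  push_neg at hM
  obtain ⟨dec, hdec, hdecI⟩ := hrec
  set L := 2^(n-k) with hL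
  set st : ℕ → ℕ := fun t => t * (k+1) with hst
  set len : ℕ → ℕ := fun t => min k (M - 1 - st t) with hlen
  set g : ℕ → Finset (Fin n → Bool) :=
    fun t => resFin (extCW γ (intvl M (st t) (len t))) with hg
  have hvalid : ∀ t ≤ L, st t + len t < M ∧ len t ≤ k := by
    intro t ht
    have h1 : st t ≤ L * (k+1) := Nat.mul_le_mul_right _ ht
    simp only [hlen]
    omega
  have hfull : ∀ t < L, len t = k := by
    intro t ht
    have h1 : st t + (k+1) ≤ L * (k+1) := by
      have : (t+1) * (k+1) ≤ L * (k+1) := Nat.mul_le_mul_right _ ht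
      simpa [hst, Nat.succ_mul] using this
    simp only [hlen]
    omega
  have hdisj : ∀ s ∈ Finset.range (L+1), ∀ t ∈ Finset.range (L+1), s ≠ t →
      Disjoint (g s) (g t) := by
    have key : ∀ s t, s < t → t ≤ L → Disjoint (g s) (g t) := by
      intro s t hst' htL
      rw [Finset.disjoint_left]
      intro y hys hyt
      have hs := hvalid s (by omega)
      have ht := hvalid t htL
      have hms := hdecI (st s) (len s) hs.2 hs.1 y (mem_resFin.mp hys)
      have hmt := hdecI (st t) (len t) ht.2 ht.1 y (mem_resFin.mp hyt)
      have hsep : st s + (k+1) ≤ st t := by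
        have : (s+1) * (k+1) ≤ t * (k+1) := Nat.mul_le_mul_right _ hst'
        simpa [hst, Nat.succ_mul] using this
      obtain ⟨h1, h2⟩ := hms
      obtain ⟨h3, h4⟩ := hmt
      have := hs.2
      omega
    intro s hs t ht hne
    simp only [Finset.mem_range] at hs ht
    rcases Nat.lt_or_ge s t with h | h
    · exact key s t h (by omega)
    · exact (key t s (by omega) (by omega)).symm
  have hub : ∑ t ∈ Finset.range (L+1), (g t).card ≤ 2 ^ n := by
    rw [← Finset.card_biUnion hdisj]
    calc ((Finset.range (L+1)).biUnion g).card ≤ Fintype.card (Fin n → Bool) :=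
          Finset.card_le_univ _
      _ = 2 ^ n := by simp [Fintype.card_fun]
  have hlb : 2 ^ n + 1 ≤ ∑ t ∈ Finset.range (L+1), (g t).card := by
    rw [Finset.sum_range_succ]
    have h1 : L * 2^k ≤ ∑ t ∈ Finset.range L, (g t).card := by
      calc L * 2^k = ∑ _t ∈ Finset.range L, 2^k := by
            rw [Finset.sum_const, Finset.card_range, smul_eq_mul]
        _ ≤ _ := by
            apply Finset.sum_le_sum
            intro t ht
            simp only [Finset.mem_range] at ht
            have hm := mcount_ge ⟨dec, hdec, hdecI⟩ (len t) (hvalid t (by omega)).2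
              (st t) (hvalid t (by omega)).1
            calc 2^k = 2^(len t) := by rw [hfull t ht]
              _ ≤ 2 ^ (mFin (extCW γ (intvl M (st t) (len t)))).card :=
                  Nat.pow_le_pow_right (by norm_num) hm
              _ ≤ (g t).card := card_resFin _
    have h2 : 1 ≤ (g L).card :=
      le_trans (Nat.one_le_two_pow) (card_resFin _)
    have h3 : L * 2^k = 2^n := by
      rw [hL, ← pow_add, Nat.sub_add_cancel hkn]
    omega
  omega
end

section
/- The unary thermometer codes γ^u_n and γ^ū_n are n-preserving. -/
/-- Unary thermometer codeword `1^m 0^(k-m)`. -/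
def unary (k m : ℕ) : Fin k → Bool := fun j => decide (j.val < m)

/-- Unary thermometer codeword `0^m 1^(k-m)`. -/
def unaryBar (k m : ℕ) : Fin k → Bool := fun j => decide (m ≤ j.val)

lemma image_subset_resolution {M n : ℕ} (γ : Fin M → Fin n → Bool) (I : Set (Fin M)) :
    γ '' I ⊆ Set.range γ ∩ res (extCW γ I) := by
  rintro y ⟨a, ha, rfl⟩
  refine ⟨⟨a, rfl⟩, fun j b hb => ?_⟩
  unfold extCW at hb
  split_ifs at hb with h1 h2
  · cases hb; exact h1 a ha
  · cases hb; exact h2 a ha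

/-- The unary thermometer codes are `n`-preserving. -/
theorem unary_preserving (n : ℕ) :
    Preserving (fun a : Fin (n+1) => unary n a.val) n ∧
    Preserving (fun a : Fin (n+1) => unaryBar n a.val) n := by
  constructor
  · intro i p hp hip
    apply Set.Subset.antisymm
    · rintro y ⟨⟨a, rfl⟩, hres⟩
      refine ⟨a, ⟨?_, ?_⟩, rfl⟩
      · by_contra h
        push_neg at h
        have hjn : a.val < n := by omega
        have hx : extCW (fun a : Fin (n+1) => unary n a.val) (intvl (n+1) i p)
            ⟨a.val, hjn⟩ = some true := by
          unfold extCW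
          rw [if_pos]
          intro a' ha'
          simp only [unary, decide_eq_true_eq]
          exact lt_of_lt_of_le h ha'.1
        have := hres ⟨a.val, hjn⟩ true hx
        simp [unary] at this
      · by_contra h
        push_neg at h
        have hjn : i + p < n := by omega
        have hx : extCW (fun a : Fin (n+1) => unary n a.val) (intvl (n+1) i p)
            ⟨i + p, hjn⟩ = some false := by
          unfold extCW
          rw [if_neg, if_pos]
          · intro a' ha'
            simp only [unary, decide_eq_false_iff_not, not_lt]
            exact ha'.2
          · intro hall
            have := hall ⟨i, by omega⟩ ⟨le_refl i, Nat.le_add_right i p⟩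
            simp [unary, Fin.val_mk] at this
        have := hres ⟨i + p, hjn⟩ false hx
        simp [unary] at this
        omega
    · exact image_subset_resolution _ _
  · intro i p hp hip
    apply Set.Subset.antisymm
    · rintro y ⟨⟨a, rfl⟩, hres⟩
      refine ⟨a, ⟨?_, ?_⟩, rfl⟩
      · by_contra h
        push_neg at h
        have hjn : a.val < n := by omega
        have hx : extCW (fun a : Fin (n+1) => unaryBar n a.val) (intvl (n+1) i p)
            ⟨a.val, hjn⟩ = some false := by
          unfold extCW
          rw [if_neg, if_pos]
          · intro a' ha'
            simp only [unaryBar, decide_eq_false_iff_not, not_le]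
            exact lt_of_lt_of_le h ha'.1
          · intro hall
            have := hall ⟨i, by omega⟩ ⟨le_refl i, Nat.le_add_right i p⟩
            simp [unaryBar, Fin.val_mk] at this
            omega
        have := hres ⟨a.val, hjn⟩ false hx
        simp [unaryBar] at this
      · by_contra h
        push_neg at h
        have hjn : i + p < n := by omega
        have hx : extCW (fun a : Fin (n+1) => unaryBar n a.val) (intvl (n+1) i p)
            ⟨i + p, hjn⟩ = some true := by
          unfold extCW
          rw [if_pos]
          intro a' ha'
          simp only [unaryBar, decide_eq_true_eq]
          exact ha'.2
        have := hres ⟨i + p, hjn⟩ true hx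
        simp [unaryBar] at this
        omega
    · exact image_subset_resolution _ _
end

section
/- Let n, p ∈ ℕ, i ∈ {0,...,n} with i + p ≤ n, and I = ⟨i,i+p⟩ = {i,...,i+p}. For every x_0 ∈ res(⊛γ^u_n(I)) it holds that ũ_n(0, x_0) ∈ γ^u_n(I), and for every x_1 ∈ res(⊛γ^ū_n(I)) it holds that ũ_n(1, x_1) ∈ γ^ū_n(I). -/
/-- `ℓ_b^max`: maximal (1-indexed) position with bit `b`, `0` if none. -/
def lmaxIdx {k : ℕ} (b : Bool) (x : Fin k → Bool) : ℕ :=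
  (Finset.univ.filter (fun i : Fin k => x i = b)).sup (fun i => i.val + 1)

/-- `ℓ_b^min`: minimal (1-indexed) position with bit `b`, `k+1` if none. -/
def lminIdx {k : ℕ} (b : Bool) (x : Fin k → Bool) : ℕ :=
  (((Finset.univ.filter (fun i : Fin k => x i = b)).image (fun i : Fin k => i.val + 1)) ∪ {k+1}).min'
    (Finset.Nonempty.inr (Finset.singleton_nonempty _))

/-- The bit at (1-indexed) position `⌈k/2⌉`, i.e. zero-based index `(k-1)/2`. -/
def midBit {k : ℕ} (x : Fin k → Bool) : Bool :=
  if h : (k-1)/2 < k then x ⟨(k-1)/2, h⟩ else false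

/-- The unary thermometer mapping `ũ_k`. -/
def uMap {k : ℕ} (π : Bool) (x : Fin k → Bool) : Fin k → Bool :=
  match π, midBit x with
  | false, false => unary k (lminIdx false x - 1)
  | false, true  => unary k (lmaxIdx true x)
  | true,  false => unaryBar k (lmaxIdx false x)
  | true,  true  => unaryBar k (lminIdx true x - 1)


/-! A resolution of the superposition of the codewords `γ(i), …, γ(i+p)` must agree with them
wherever they all agree, i.e. outside the positions `[i, i+p)`. So it reads `b` before position `i`
and `!b` from position `i+p` on (`b = 1` for `γ^u`, `b = 0` for `γ^ū`), and then both indices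
`ℓ_b^max` and `ℓ_{!b}^min - 1` that `ũ_n` may select lie in `[i, i+p]`, whatever the middle bit. -/

lemma res_extCW_apply_of_forall_eq {M n : ℕ} {γ : Fin M → Fin n → Bool} {I : Set (Fin M)}
    {x : Fin n → Bool} (hx : x ∈ res (extCW γ I)) {a₀ : Fin M} (ha₀ : a₀ ∈ I) {j : Fin n}
    (hj : ∀ a ∈ I, γ a j = γ a₀ j) : x j = γ a₀ j := by
  apply hx j
  cases h : γ a₀ j
  · have hne : ¬ ∀ a ∈ I, γ a j = true := fun hall => by simpa [h] using hall a₀ ha₀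
    simp only [extCW, if_neg hne, if_pos (fun a ha => (hj a ha).trans h)]
  · simp only [extCW, if_pos (fun a ha => (hj a ha).trans h)]

def IsStep {k : ℕ} (b : Bool) (x : Fin k → Bool) (i q : ℕ) : Prop :=
  (∀ j : Fin k, j.val < i → x j = b) ∧ ∀ j : Fin k, q ≤ j.val → x j = !b

section Indices

variable {k : ℕ} {b : Bool} {x : Fin k → Bool}

lemma lmaxIdx_le_iff {c : ℕ} : lmaxIdx b x ≤ c ↔ ∀ j : Fin k, x j = b → j.val + 1 ≤ c := by
  simp [lmaxIdx, Finset.sup_le_iff]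

lemma le_lminIdx_iff {c : ℕ} :
    c ≤ lminIdx b x ↔ (∀ j : Fin k, x j = b → c ≤ j.val + 1) ∧ c ≤ k + 1 := by
  simp [lminIdx, Finset.le_min'_iff, and_comm]

lemma le_lmaxIdx {j : Fin k} (h : x j = b) : j.val + 1 ≤ lmaxIdx b x :=
  lmaxIdx_le_iff.mp le_rfl j h

lemma lminIdx_le {j : Fin k} (h : x j = b) : lminIdx b x ≤ j.val + 1 :=
  (le_lminIdx_iff.mp le_rfl).1 j h

lemma lminIdx_le_succ : lminIdx b x ≤ k + 1 :=
  (le_lminIdx_iff.mp le_rfl).2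

lemma IsStep.lmaxIdx_mem_Icc {i q : ℕ} (hx : IsStep b x i q) (hik : i ≤ k) :
    lmaxIdx b x ∈ Set.Icc i q := by
  constructor
  · rcases Nat.eq_zero_or_pos i with rfl | hi
    · exact Nat.zero_le _
    · have := le_lmaxIdx (hx.1 ⟨i - 1, by omega⟩ (by simp only; omega))
      simp only at this
      omega
  · refine lmaxIdx_le_iff.mpr fun j hj => ?_
    by_contra hjq
    simp [hx.2 j (by omega)] at hj

lemma IsStep.lminIdx_not_sub_one_mem_Icc {i q : ℕ} (hx : IsStep b x i q) (hik : i ≤ k) :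
    lminIdx (!b) x - 1 ∈ Set.Icc i q := by
  have hlow : i + 1 ≤ lminIdx (!b) x := by
    refine le_lminIdx_iff.mpr ⟨fun j hj => ?_, by omega⟩
    by_contra hji
    simp [hx.1 j (by omega)] at hj
  have hup : lminIdx (!b) x ≤ q + 1 := by
    by_cases hq : q < k
    · exact lminIdx_le (hx.2 ⟨q, hq⟩ le_rfl)
    · have := lminIdx_le_succ (b := !b) (x := x)
      omega
  constructor <;> omega

end Indices

section Thermometer

variable {n i p : ℕ} {x : Fin n → Bool}

lemma isStep_of_mem_res_unary (hip : i + p ≤ n)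
    (hx : x ∈ res (extCW (fun a : Fin (n+1) => unary n a.val) (intvl (n+1) i p))) :
    IsStep true x i (i + p) := by
  have hi : (⟨i, by omega⟩ : Fin (n+1)) ∈ intvl (n+1) i p :=
    ⟨le_rfl, Nat.le_add_right i p⟩
  refine ⟨fun j hj => ?_, fun j hj => ?_⟩ <;>
  · rw [res_extCW_apply_of_forall_eq hx hi fun a ha => ?_]
    · simp only [unary, decide_eq_true_eq, decide_eq_false_iff_not, Bool.not_true]
      omega
    · have := ha.1; have := ha.2
      simp only [unary, decide_eq_decide]
      omega

lemma isStep_of_mem_res_unaryBar (hip : i + p ≤ n)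
    (hx : x ∈ res (extCW (fun a : Fin (n+1) => unaryBar n a.val) (intvl (n+1) i p))) :
    IsStep false x i (i + p) := by
  have hi : (⟨i, by omega⟩ : Fin (n+1)) ∈ intvl (n+1) i p :=
    ⟨le_rfl, Nat.le_add_right i p⟩
  refine ⟨fun j hj => ?_, fun j hj => ?_⟩ <;>
  · rw [res_extCW_apply_of_forall_eq hx hi fun a ha => ?_]
    · simp only [unaryBar, decide_eq_true_eq, decide_eq_false_iff_not, Bool.not_false]
      omega
    · have := ha.1; have := ha.2
      simp only [unaryBar, decide_eq_decide]
      omega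

lemma mem_image_intvl {β : Type*} (γ : ℕ → β) {m : ℕ} (hm : m ∈ Set.Icc i (i + p))
    (hip : i + p ≤ n) : γ m ∈ (fun a : Fin (n+1) => γ a.val) '' intvl (n+1) i p :=
  ⟨⟨m, by have := hm.2; omega⟩, hm, rfl⟩

end Thermometer

/-- Every resolution of the extended codeword of an interval of the unary
thermometer codes is mapped by `ũ_n` to a codeword of that interval. -/
theorem uMap_maps_into_interval (n i p : ℕ) (hip : i + p ≤ n) :
    (∀ x0 ∈ res (extCW (fun a : Fin (n+1) => unary n a.val) (intvl (n+1) i p)),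
        uMap false x0 ∈ (fun a : Fin (n+1) => unary n a.val) '' intvl (n+1) i p) ∧
    (∀ x1 ∈ res (extCW (fun a : Fin (n+1) => unaryBar n a.val) (intvl (n+1) i p)),
        uMap true x1 ∈ (fun a : Fin (n+1) => unaryBar n a.val) '' intvl (n+1) i p) := by
  have hin : i ≤ n := by omega
  constructor
  · intro x hx
    have hstep := isStep_of_mem_res_unary hip hx
    cases hmid : midBit x <;> simp only [uMap, hmid]
    · exact mem_image_intvl (unary n) (hstep.lminIdx_not_sub_one_mem_Icc hin) hip
    · exact mem_image_intvl (unary n) (hstep.lmaxIdx_mem_Icc hin) hip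
  · intro x hx
    have hstep := isStep_of_mem_res_unaryBar hip hx
    cases hmid : midBit x <;> simp only [uMap, hmid]
    · exact mem_image_intvl (unaryBar n) (hstep.lmaxIdx_mem_Icc hin) hip
    · exact mem_image_intvl (unaryBar n) (hstep.lminIdx_not_sub_one_mem_Icc hin) hip
end

section
/- The unary thermometer codes γ^u_n and γ^ū_n are n-recoverable. -/
lemma card_filter_val_lt (n m : ℕ) :
    (Finset.univ.filter fun j : Fin n => j.val < m).card = min m n := by
  have h : ((Finset.univ : Finset (Fin n)).map Fin.valEmbedding).filter (· < m)
      = (Finset.univ.filter fun j : Fin n => j.val < m).map Fin.valEmbedding := by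
    rw [Finset.filter_map]
    rfl
  have h2 : ((Finset.univ : Finset (Fin n)).map Fin.valEmbedding).filter (· < m)
      = Finset.range (min m n) := by
    rw [Fin.map_valEmbedding_univ]
    ext x
    simp only [Finset.mem_filter, Finset.mem_Iio, Finset.mem_range]
    omega
  have := congrArg Finset.card h
  rw [h2, Finset.card_range, Finset.card_map] at this
  omega

/-- The unary thermometer codes are `n`-recoverable. -/
theorem unary_recoverable (n : ℕ) :
    Recoverable (fun a : Fin (n+1) => unary n a.val) n ∧
    Recoverable (fun a : Fin (n+1) => unaryBar n a.val) n := by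
  constructor
  · refine ⟨fun y => ⟨(Finset.univ.filter fun j : Fin n => y j = true).card, ?_⟩, ?_, ?_⟩
    · calc (Finset.univ.filter fun j : Fin n => y j = true).card
          ≤ Finset.univ.card := Finset.card_filter_le _ _
        _ = n := by simp
        _ < n + 1 := Nat.lt_succ_self n
    · intro v
      have hv : v.val ≤ n := Nat.lt_succ_iff.mp v.isLt
      have : (Finset.univ.filter fun j : Fin n => unary n v.val j = true).card = v.val := by
        have hfe : (Finset.univ.filter fun j : Fin n => unary n v.val j = true)
            = Finset.univ.filter fun j : Fin n => j.val < v.val :=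
          Finset.filter_congr (fun j _ => by simp [unary])
        rw [hfe, card_filter_val_lt, min_eq_left hv]
      exact Fin.ext this
    · intro i p hp hip y hy
      simp only [intvl, Set.mem_setOf_eq]
      have hin : i + p ≤ n := Nat.lt_succ_iff.mp hip
      constructor
      · -- lower bound: all j < i have y j = true
        have hsub : (Finset.univ.filter fun j : Fin n => j.val < i) ⊆
            (Finset.univ.filter fun j : Fin n => y j = true) := by
          intro j hj
          simp only [Finset.mem_filter, Finset.mem_univ, true_and] at hj ⊢
          apply hy j true
          unfold extCW
          rw [if_pos]
          intro a ha
          simp only [intvl, Set.mem_setOf_eq] at ha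
          simp [unary]; omega
        have := Finset.card_le_card hsub
        rw [card_filter_val_lt, min_eq_left (by omega)] at this
        exact this
      · -- upper bound: all j ≥ i+p have y j = false
        have hsub : (Finset.univ.filter fun j : Fin n => y j = true) ⊆
            (Finset.univ.filter fun j : Fin n => j.val < i + p) := by
          intro j hj
          simp only [Finset.mem_filter, Finset.mem_univ, true_and] at hj ⊢
          by_contra h
          push_neg at h
          have : y j = false := by
            apply hy j false
            unfold extCW
            rw [if_neg, if_pos]
            · intro a ha
              simp only [intvl, Set.mem_setOf_eq] at ha
              simp [unary]; omega
            · push_neg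
              refine ⟨⟨i + p, hip⟩, ⟨by simp, by simp⟩, ?_⟩
              simp [unary]; omega
          simp [this] at hj
        have := Finset.card_le_card hsub
        rw [card_filter_val_lt, min_eq_left hin] at this
        exact this
  · refine ⟨fun y => ⟨(Finset.univ.filter fun j : Fin n => y j = false).card, ?_⟩, ?_, ?_⟩
    · calc (Finset.univ.filter fun j : Fin n => y j = false).card
          ≤ Finset.univ.card := Finset.card_filter_le _ _
        _ = n := by simp
        _ < n + 1 := Nat.lt_succ_self n
    · intro v
      have hv : v.val ≤ n := Nat.lt_succ_iff.mp v.isLt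
      have : (Finset.univ.filter fun j : Fin n => unaryBar n v.val j = false).card = v.val := by
        have hfe : (Finset.univ.filter fun j : Fin n => unaryBar n v.val j = false)
            = Finset.univ.filter fun j : Fin n => j.val < v.val :=
          Finset.filter_congr (fun j _ => by simp [unaryBar]; try omega)
        rw [hfe, card_filter_val_lt, min_eq_left hv]
      exact Fin.ext this
    · intro i p hp hip y hy
      simp only [intvl, Set.mem_setOf_eq]
      have hin : i + p ≤ n := Nat.lt_succ_iff.mp hip
      constructor
      · have hsub : (Finset.univ.filter fun j : Fin n => j.val < i) ⊆
            (Finset.univ.filter fun j : Fin n => y j = false) := by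
          intro j hj
          simp only [Finset.mem_filter, Finset.mem_univ, true_and] at hj ⊢
          apply hy j false
          unfold extCW
          rw [if_neg, if_pos]
          · intro a ha
            simp only [intvl, Set.mem_setOf_eq] at ha
            simp [unaryBar]; omega
          · push_neg
            refine ⟨⟨i, by omega⟩, ⟨by simp, by simp⟩, ?_⟩
            simp [unaryBar]; omega
        have := Finset.card_le_card hsub
        rw [card_filter_val_lt, min_eq_left (by omega)] at this
        exact this
      · have hsub : (Finset.univ.filter fun j : Fin n => y j = false) ⊆
            (Finset.univ.filter fun j : Fin n => j.val < i + p) := by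
          intro j hj
          simp only [Finset.mem_filter, Finset.mem_univ, true_and] at hj ⊢
          by_contra h
          push_neg at h
          have : y j = true := by
            apply hy j true
            unfold extCW
            rw [if_pos]
            intro a ha
            simp only [intvl, Set.mem_setOf_eq] at ha
            simp [unaryBar]; omega
          simp [this] at hj
        have := Finset.card_le_card hsub
        rw [card_filter_val_lt, min_eq_left hin] at this
        exact this
end

section
/- Correctness of the hybrid decoding formula: for all n ≥ k ≥ 1 and every i ∈ {0,...,2^n(k+1)-1}, writing x = γ^h_{n,k}(i) with BRGC part x_g and unary part x_u, it holds that i = (γ^g_n)^{-1}(x_g)·(k+1) + (γ^u_k)^{-1}(x_u) if parity(x_g) = 0, and i = (γ^g_n)^{-1}(x_g)·(k+1) + (γ^ū_k)^{-1}(x_u) if parity(x_g) = 1. In particular, γ^h_{n,k} is injective. -/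
/-- The binary reflected Gray code, position `0` is the most significant bit. -/
def brgc : (n : ℕ) → Fin (2^n) → Fin n → Bool
  | 0 => fun _ => fun i => i.elim0
  | n+1 => fun i =>
      if h : i.val < 2^n then Fin.cons false (brgc n ⟨i.val, h⟩)
      else Fin.cons true (brgc n ⟨2^(n+1) - i.val - 1, by
        have h1 := i.isLt
        have h2 : (2:ℕ)^(n+1) = 2^n * 2 := pow_succ 2 n
        omega⟩)

/-- Parity of a Boolean word: `true` iff the number of `1`s is odd. -/
def parityW {m : ℕ} (x : Fin m → Bool) : Bool :=
  decide ((Finset.univ.filter (fun i : Fin m => x i = true)).card % 2 = 1)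

/-- The hybrid code `γ^h_{n,k}`: an `n`-bit BRGC part followed by a `k`-bit
unary part whose flavor is selected by the parity of the BRGC part. -/
def hybrid (n k : ℕ) : Fin (2^n * (k+1)) → Fin (n + k) → Bool :=
  fun i =>
    let xg : Fin n → Bool := brgc n ⟨i.val / (k+1), Nat.div_lt_of_lt_mul (mul_comm (2^n) (k+1) ▸ i.isLt)⟩
    let xu : Fin k → Bool :=
      if parityW xg = false then unary k (i.val % (k+1)) else unaryBar k (i.val % (k+1))
    Fin.append xg xu

/-- The BRGC part (first `n` bits) of an `(n+k)`-bit word. -/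
def gpart {n k : ℕ} (x : Fin (n+k) → Bool) : Fin n → Bool := fun j => x (Fin.castAdd k j)

/-- The unary part (last `k` bits) of an `(n+k)`-bit word. -/
def upart {n k : ℕ} (x : Fin (n+k) → Bool) : Fin k → Bool := fun j => x (Fin.natAdd n j)

lemma brgc_injective : ∀ n, Function.Injective (brgc n)
  | 0 => fun i j _ => Fin.ext (by have := i.isLt; have := j.isLt; norm_num at *)
  | n+1 => by
    intro i j h
    have IH := brgc_injective n
    simp only [brgc] at h
    split_ifs at h with h1 h2 h2
    · have ht := IH (Fin.cons_right_injective _ h)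
      exact Fin.ext (by simpa using congrArg Fin.val ht)
    · have := congrFun h 0
      simp at this
    · have := congrFun h 0
      simp at this
    · have ht := IH (Fin.cons_right_injective _ h)
      have := congrArg Fin.val ht
      simp at this
      have hi := i.isLt
      have hj := j.isLt
      have h2 : (2:ℕ)^(n+1) = 2^n * 2 := pow_succ 2 n
      exact Fin.ext (by omega)


lemma unary_inj {k m m' : ℕ} (hm : m ≤ k) (hm' : m' ≤ k) (h : unary k m = unary k m') :
    m = m' := by
  by_contra hne
  rcases Nat.lt_or_ge m m' with hlt | hge
  · have := congrFun h ⟨m, lt_of_lt_of_le hlt hm'⟩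
    simp only [unary, decide_eq_decide] at this
    omega
  · have hlt : m' < m := by omega
    have := congrFun h ⟨m', lt_of_lt_of_le hlt hm⟩
    simp only [unary, decide_eq_decide] at this
    omega


lemma unaryBar_inj {k m m' : ℕ} (hm : m ≤ k) (hm' : m' ≤ k) (h : unaryBar k m = unaryBar k m') :
    m = m' := by
  by_contra hne
  rcases Nat.lt_or_ge m m' with hlt | hge
  · have := congrFun h ⟨m, lt_of_lt_of_le hlt hm'⟩
    simp only [unaryBar, decide_eq_decide] at this
    omega
  · have hlt : m' < m := by omega
    have := congrFun h ⟨m', lt_of_lt_of_le hlt hm⟩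
    simp only [unaryBar, decide_eq_decide] at this
    omega


lemma div_lt_aux {n k : ℕ} (i : Fin (2^n * (k+1))) : i.val / (k+1) < 2^n :=
  Nat.div_lt_of_lt_mul (mul_comm (2^n) (k+1) ▸ i.isLt)


lemma hybrid_gpart (n k : ℕ) (i : Fin (2^n * (k+1))) :
    gpart (hybrid n k i) = brgc n ⟨i.val / (k+1), div_lt_aux i⟩ := by
  funext j
  simp only [gpart, hybrid, Fin.append_left]


lemma hybrid_upart (n k : ℕ) (i : Fin (2^n * (k+1))) :
    upart (hybrid n k i) =
      if parityW (brgc n ⟨i.val / (k+1), div_lt_aux i⟩) = false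
      then unary k (i.val % (k+1)) else unaryBar k (i.val % (k+1)) := by
  funext j
  simp only [upart, hybrid, Fin.append_right]


/-- Correctness of the hybrid decoding formula, and injectivity of the
hybrid code. -/
theorem hybrid_decoding_correct (n k : ℕ) (hk : 1 ≤ k) (hnk : k ≤ n)
    (i : Fin (2^n * (k+1))) (a : Fin (2^n)) (c : Fin (k+1))
    (hg : gpart (hybrid n k i) = brgc n a) :
    ((parityW (gpart (hybrid n k i)) = false →
        upart (hybrid n k i) = unary k c.val →
        i.val = a.val * (k+1) + c.val) ∧
     (parityW (gpart (hybrid n k i)) = true →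
        upart (hybrid n k i) = unaryBar k c.val →
        i.val = a.val * (k+1) + c.val)) ∧
    Function.Injective (hybrid n k) := by
  have hga : a = ⟨i.val / (k+1), div_lt_aux i⟩ :=
    brgc_injective n (hg.symm.trans (hybrid_gpart n k i))
  have haval : a.val = i.val / (k+1) := by rw [hga]
  have hrle : i.val % (k+1) ≤ k := Nat.lt_succ_iff.mp (Nat.mod_lt _ (Nat.succ_pos k))
  have hcle : c.val ≤ k := Nat.lt_succ_iff.mp c.isLt
  have hdm : i.val = (i.val / (k+1)) * (k+1) + i.val % (k+1) := by
    rw [Nat.div_add_mod']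
  constructor
  · constructor
    · intro hpar hu
      rw [hybrid_gpart] at hpar
      rw [hybrid_upart, if_pos hpar] at hu
      have := unary_inj hrle hcle hu
      rw [haval]
      omega
    · intro hpar hu
      rw [hybrid_gpart] at hpar
      rw [hybrid_upart, if_neg (by simp [hpar])] at hu
      have := unaryBar_inj hrle hcle hu
      rw [haval]
      omega
  · intro x y hxy
    have hgx : gpart (hybrid n k x) = gpart (hybrid n k y) := by rw [hxy]
    have hux : upart (hybrid n k x) = upart (hybrid n k y) := by rw [hxy]
    rw [hybrid_gpart, hybrid_gpart] at hgx
    have hq : x.val / (k+1) = y.val / (k+1) := by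
      have := congrArg Fin.val (brgc_injective n hgx)
      simpa using this
    have hrx : x.val % (k+1) ≤ k := Nat.lt_succ_iff.mp (Nat.mod_lt _ (Nat.succ_pos k))
    have hry : y.val % (k+1) ≤ k := Nat.lt_succ_iff.mp (Nat.mod_lt _ (Nat.succ_pos k))
    rw [hybrid_upart, hybrid_upart] at hux
    have hpeq : parityW (brgc n ⟨x.val / (k+1), div_lt_aux x⟩) =
        parityW (brgc n ⟨y.val / (k+1), div_lt_aux y⟩) := by
      rw [show (⟨x.val / (k+1), div_lt_aux x⟩ : Fin (2^n)) = ⟨y.val / (k+1), div_lt_aux y⟩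
        from Fin.ext hq]
    have hr : x.val % (k+1) = y.val % (k+1) := by
      by_cases hp : parityW (brgc n ⟨x.val / (k+1), div_lt_aux x⟩) = false
      · rw [if_pos hp, if_pos (hpeq ▸ hp)] at hux
        exact unary_inj hrx hry hux
      · rw [if_neg hp, if_neg (hpeq ▸ hp)] at hux
        exact unaryBar_inj hrx hry hux
    have hx := Nat.div_add_mod x.val (k+1)
    have hy := Nat.div_add_mod y.val (k+1)
    rw [hq] at hx
    exact Fin.ext (by omega)
end

section
/- Structure of hybrid extended codewords within one BRGC column: let i ∈ {0,...,2^n(k+1)-1}, p ≤ k, and I = ⟨i,i+p⟩ with i+p ≤ 2^n(k+1)-1. If there exist α, ℓ ∈ ℕ such that i = ℓ(k+1) + α and α + p ≤ k, then the extended codeword x_I = ⊛γ^h_{n,k}(I) satisfies (x_I)_g = γ^g_n(ℓ) and (x_I)_u = b^α M^p (¬b)^{k-α-p}, where b = ¬parity((x_I)_g). -/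
/-- Structure of hybrid extended codewords within one BRGC column:
if `i = ℓ(k+1) + α` and `α + p ≤ k`, then the BRGC part of the extended
codeword is the stable word `γ^g_n(ℓ)` and the unary part is
`b^α M^p (¬b)^(k-α-p)` with `b = ¬parity(γ^g_n(ℓ))`. -/
theorem hybrid_ext_same_column (n k : ℕ) (hk : 1 ≤ k) (hnk : k ≤ n)
    (i : Fin (2^n * (k+1))) (p α : ℕ) (ℓ : Fin (2^n))
    (hp : p ≤ k) (hip : i.val + p < 2^n * (k+1))
    (hi : i.val = ℓ.val * (k+1) + α) (hαp : α + p ≤ k) :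
    (∀ j : Fin n,
      extCW (hybrid n k) (intvl (2^n * (k+1)) i.val p) (Fin.castAdd k j) =
        some (brgc n ℓ j)) ∧
    (∀ j : Fin k,
      extCW (hybrid n k) (intvl (2^n * (k+1)) i.val p) (Fin.natAdd n j) =
        if j.val < α then some (!parityW (brgc n ℓ))
        else if j.val < α + p then none
        else some (parityW (brgc n ℓ))) := by
  have key : ∀ a : Fin (2^n * (k+1)), i.val ≤ a.val → a.val ≤ i.val + p →
      (∀ j : Fin n, hybrid n k a (Fin.castAdd k j) = brgc n ℓ j) ∧
      (∀ j : Fin k, hybrid n k a (Fin.natAdd n j) =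
        if j.val < a.val - ℓ.val * (k+1) then !parityW (brgc n ℓ) else parityW (brgc n ℓ)) := by
    intro a h1 h2
    have har : a.val = (a.val - ℓ.val * (k+1)) + ℓ.val * (k+1) := by omega
    have hrk : a.val - ℓ.val * (k+1) ≤ k := by omega
    have hr0 : (a.val - ℓ.val * (k+1)) / (k+1) = 0 := Nat.div_eq_of_lt (by omega)
    have hrm : (a.val - ℓ.val * (k+1)) % (k+1) = a.val - ℓ.val * (k+1) :=
      Nat.mod_eq_of_lt (by omega)
    have hdiv : a.val / (k+1) = ℓ.val := by
      conv_lhs => rw [har]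
      rw [Nat.add_mul_div_right _ _ (Nat.succ_pos k), hr0, zero_add]
    have hmod : a.val % (k+1) = a.val - ℓ.val * (k+1) := by
      conv_lhs => rw [har]
      rw [Nat.add_mul_mod_self_right, hrm]
    have hg : (brgc n ⟨a.val / (k+1),
        Nat.div_lt_of_lt_mul (mul_comm (2^n) (k+1) ▸ a.isLt)⟩) = brgc n ℓ := by
      exact congrArg (brgc n) (Fin.ext hdiv)
    constructor
    · intro j
      simp only [hybrid, Fin.append_left, hg]
    · intro j
      have hru : hybrid n k a (Fin.natAdd n j) =
          (if parityW (brgc n ℓ) = false then unary k (a.val % (k+1))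
           else unaryBar k (a.val % (k+1))) j := by
        simp only [hybrid, Fin.append_right, hg]
      rw [hru, hmod]
      cases hb : parityW (brgc n ℓ) with
      | false => simp [unary]
      | true =>
        simp only [Bool.true_eq_false, if_false, unaryBar, Bool.not_true]
        by_cases hjr : j.val < a.val - ℓ.val * (k+1)
        · rw [if_pos hjr, decide_eq_false_iff_not]
          omega
        · rw [if_neg hjr, decide_eq_true_eq]
          omega
  have hiI : i ∈ intvl (2^n * (k+1)) i.val p := ⟨le_refl _, by omega⟩
  have hipI : (⟨i.val + p, hip⟩ : Fin (2^n * (k+1))) ∈ intvl (2^n * (k+1)) i.val p :=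
    ⟨by simp, by simp⟩
  constructor
  · intro j
    have hall : ∀ a ∈ intvl (2^n * (k+1)) i.val p,
        hybrid n k a (Fin.castAdd k j) = brgc n ℓ j :=
      fun a ha => (key a ha.1 ha.2).1 j
    cases hbit : brgc n ℓ j with
    | true =>
      rw [extCW, if_pos (fun a ha => by rw [hall a ha, hbit])]
    | false =>
      rw [extCW, if_neg (fun h => by have := h i hiI; rw [hall i hiI, hbit] at this; simp at this),
        if_pos (fun a ha => by rw [hall a ha, hbit])]
  · intro j
    have hur : ∀ a : Fin (2^n * (k+1)), a ∈ intvl (2^n * (k+1)) i.val p →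
        hybrid n k a (Fin.natAdd n j) =
          if j.val < a.val - ℓ.val * (k+1) then !parityW (brgc n ℓ) else parityW (brgc n ℓ) :=
      fun a ha => (key a ha.1 ha.2).2 j
    by_cases h1 : j.val < α
    · rw [if_pos h1]
      have hall : ∀ a ∈ intvl (2^n * (k+1)) i.val p,
          hybrid n k a (Fin.natAdd n j) = !parityW (brgc n ℓ) := by
        intro a ha
        rw [hur a ha, if_pos (by have := ha.1; omega)]
      cases hb : parityW (brgc n ℓ) with
      | true =>
        rw [extCW, if_neg (fun h => by have := h i hiI; rw [hall i hiI, hb] at this; simp at this),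
          if_pos (fun a ha => by rw [hall a ha]; simp [hb])]
        simp [hb]
      | false =>
        rw [extCW, if_pos (fun a ha => by rw [hall a ha]; simp [hb])]
        simp [hb]
    · rw [if_neg h1]
      by_cases h2 : j.val < α + p
      · rw [if_pos h2]
        have e1 : hybrid n k i (Fin.natAdd n j) = parityW (brgc n ℓ) := by
          rw [hur i hiI, if_neg (by omega)]
        have e2 : hybrid n k ⟨i.val + p, hip⟩ (Fin.natAdd n j) = !parityW (brgc n ℓ) := by
          rw [hur _ hipI, if_pos (by simp; omega)]
        rw [extCW, if_neg, if_neg]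
        · intro h
          have ha := h i hiI
          have hb' := h ⟨i.val + p, hip⟩ hipI
          rw [e1] at ha; rw [e2] at hb'
          cases parityW (brgc n ℓ) <;> simp_all
        · intro h
          have ha := h i hiI
          have hb' := h ⟨i.val + p, hip⟩ hipI
          rw [e1] at ha; rw [e2] at hb'
          cases parityW (brgc n ℓ) <;> simp_all
      · rw [if_neg h2]
        have hall : ∀ a ∈ intvl (2^n * (k+1)) i.val p,
            hybrid n k a (Fin.natAdd n j) = parityW (brgc n ℓ) := by
          intro a ha
          rw [hur a ha, if_neg (by have := ha.2; omega)]
        cases hb : parityW (brgc n ℓ) with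
        | true =>
          rw [extCW, if_pos (fun a ha => by rw [hall a ha, hb])]
        | false =>
          rw [extCW,
            if_neg (fun h => by have := h i hiI; rw [hall i hiI, hb] at this; simp at this),
            if_pos (fun a ha => by rw [hall a ha, hb])]
end

section
/- For all n, k ∈ ℕ with n ≥ k ≥ 1, the hybrid code γ^h_{n,k} is k-preserving. -/
lemma brgc_lo {n q : ℕ} (h : q < 2^n) (hq : q < 2^(n+1)) :
    brgc (n+1) ⟨q, hq⟩ = Fin.cons false (brgc n ⟨q, h⟩) := by
  simp only [brgc]; rw [dif_pos h]

lemma brgc_hi {n q : ℕ} (h : ¬ q < 2^n) (hq : q < 2^(n+1)) (h' : 2^(n+1) - q - 1 < 2^n) :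
    brgc (n+1) ⟨q, hq⟩ = Fin.cons true (brgc n ⟨2^(n+1) - q - 1, h'⟩) := by
  simp only [brgc]; rw [dif_neg h]

lemma brgc_inj (n : ℕ) : Function.Injective (brgc n) := by
  induction n with
  | zero =>
    intro a b _
    apply Fin.ext
    have := a.isLt; have := b.isLt
    omega
  | succ n ih =>
    intro a b h
    have pow2 : (2:ℕ)^(n+1) = 2^n * 2 := pow_succ 2 n
    obtain ⟨a, ha2⟩ := a; obtain ⟨b, hb2⟩ := b
    apply Fin.ext
    show a = b
    by_cases ha : a < 2^n <;> by_cases hb : b < 2^n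
    · rw [brgc_lo ha, brgc_lo hb] at h
      have h' : brgc n ⟨a, ha⟩ = brgc n ⟨b, hb⟩ := by
        have := congrArg Fin.tail h
        simpa [Fin.tail_cons] using this
      have hv := congrArg Fin.val (ih h')
      exact hv
    · rw [brgc_lo ha, brgc_hi hb _ (by omega)] at h
      exact absurd (congrFun h 0) (by simp)
    · rw [brgc_hi ha _ (by omega), brgc_lo hb] at h
      exact absurd (congrFun h 0) (by simp)
    · rw [brgc_hi ha _ (by omega), brgc_hi hb _ (by omega)] at h
      have h' : brgc n ⟨2^(n+1) - a - 1, by omega⟩ = brgc n ⟨2^(n+1) - b - 1, by omega⟩ := by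
        have := congrArg Fin.tail h
        simpa [Fin.tail_cons] using this
      have hv' : 2^(n+1) - a - 1 = 2^(n+1) - b - 1 := congrArg Fin.val (ih h')
      omega

lemma brgc_succ_diff (n : ℕ) (q : ℕ) (h1 : q < 2^n) (h2 : q+1 < 2^n) :
    ∃ t : Fin n, brgc n ⟨q, h1⟩ t ≠ brgc n ⟨q+1, h2⟩ t ∧
      ∀ j, j ≠ t → brgc n ⟨q, h1⟩ j = brgc n ⟨q+1, h2⟩ j := by
  induction n generalizing q with
  | zero => simp at h2
  | succ n ih =>
    have pow2 : (2:ℕ)^(n+1) = 2^n * 2 := pow_succ 2 n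
    rcases lt_trichotomy (q+1) (2^n) with hc | hc | hc
    · obtain ⟨t, ht1, ht2⟩ := ih q (by omega) hc
      rw [brgc_lo (by omega : q < 2^n), brgc_lo hc]
      refine ⟨t.succ, by simpa [Fin.cons_succ] using ht1, ?_⟩
      intro j
      refine Fin.cases ?_ (fun j' => ?_) j
      · intro _; simp
      · intro hj'
        simp only [Fin.cons_succ]
        exact ht2 j' (by simpa using fun hh => hj' (by rw [hh]))
    · rw [brgc_lo (by omega : q < 2^n), brgc_hi (by omega) _ (by omega)]
      have hval : (⟨2^(n+1) - (q+1) - 1, by omega⟩ : Fin (2^n)) = ⟨q, by omega⟩ := by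
        apply Fin.ext; simp; omega
      refine ⟨0, by simp, ?_⟩
      intro j
      refine Fin.cases ?_ (fun j' => ?_) j
      · intro h; exact absurd rfl h
      · intro _
        simp only [Fin.cons_succ, hval]
    · have hq : ¬ (q < 2^n) := by omega
      have hq1 : ¬ (q+1 < 2^n) := by omega
      rw [brgc_hi hq _ (by omega), brgc_hi hq1 _ (by omega)]
      obtain ⟨t, ht1, ht2⟩ := ih (2^(n+1) - (q+1) - 1) (by omega) (by omega)
      have hval : (⟨2^(n+1) - (q+1) - 1 + 1, by omega⟩ : Fin (2^n)) = ⟨2^(n+1) - q - 1, by omega⟩ := by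
        apply Fin.ext; simp; omega
      rw [hval] at ht1 ht2
      refine ⟨t.succ, by simpa [Fin.cons_succ] using fun hh => ht1 hh.symm, ?_⟩
      intro j
      refine Fin.cases ?_ (fun j' => ?_) j
      · intro _; simp
      · intro hj'
        simp only [Fin.cons_succ]
        exact (ht2 j' (by simpa using fun hh => hj' (by rw [hh]))).symm

lemma parityW_cons {m : ℕ} (b : Bool) (x : Fin m → Bool) :
    parityW (Fin.cons b x) = xor b (parityW x) := by
  unfold parityW
  rw [Finset.card_filter, Finset.card_filter, Fin.sum_univ_succ]
  simp only [Fin.cons_zero, Fin.cons_succ]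
  cases b
  · simp
  · simp only [Bool.true_xor]
    rw [Bool.eq_iff_iff]
    simp only [decide_eq_true_eq, Bool.not_eq_true', decide_eq_false_iff_not, if_true, decide_true]
    omega

lemma brgc_parity (n : ℕ) (q : ℕ) (h : q < 2^n) :
    parityW (brgc n ⟨q, h⟩) = decide (q % 2 = 1) := by
  induction n generalizing q with
  | zero =>
    have : q = 0 := by simpa using h
    subst this
    simp [parityW]
  | succ n ih =>
    have pow2 : (2:ℕ)^(n+1) = 2^n * 2 := pow_succ 2 n
    by_cases hq : q < 2^n
    · rw [brgc_lo hq, parityW_cons, ih q hq]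
      simp
    · rw [brgc_hi hq _ (by omega), parityW_cons, ih _ (by omega)]
      have hiff : ((2^(n+1) - q - 1) % 2 = 1) ↔ ¬ (q % 2 = 1) := by omega
      rcases Nat.even_or_odd q with he | he
      · have : q % 2 = 0 := Nat.even_iff.mp he
        simp [hiff, this]
      · have : q % 2 = 1 := Nat.odd_iff.mp he
        simp [hiff, this]

lemma hybrid_left {n k : ℕ} (a : Fin (2^n * (k+1))) (t : Fin n) (h : a.val / (k+1) < 2^n) :
    hybrid n k a (Fin.castAdd k t) = brgc n ⟨a.val / (k+1), h⟩ t := by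
  simp [hybrid, Fin.append_left]

lemma hybrid_right {n k : ℕ} (a : Fin (2^n * (k+1))) (u : Fin k) (h : a.val / (k+1) < 2^n) :
    hybrid n k a (Fin.natAdd n u) =
      if parityW (brgc n ⟨a.val / (k+1), h⟩) = false then decide (u.val < a.val % (k+1))
      else decide (a.val % (k+1) ≤ u.val) := by
  have hrw : (⟨a.val / (k+1), Nat.div_lt_of_lt_mul (mul_comm (2^n) (k+1) ▸ a.isLt)⟩ : Fin (2^n))
      = ⟨a.val / (k+1), h⟩ := rfl
  simp only [hybrid, Fin.append_right, unary, unaryBar, hrw]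
  split_ifs <;> rfl

lemma mem_res_extCW {M n : ℕ} (γ : Fin M → Fin n → Bool) (I : Set (Fin M)) {c : Fin M}
    (hc : c ∈ I) : γ c ∈ res (extCW γ I) := by
  intro j b hb
  unfold extCW at hb
  split_ifs at hb with h1 h2
  · simp only [Option.some.injEq] at hb; subst hb; exact h1 c hc
  · simp only [Option.some.injEq] at hb; subst hb; exact h2 c hc

lemma divmod_of_eq {d q r a : ℕ} (hr : r < d) (h : a = d * q + r) :
    a / d = q ∧ a % d = r := by
  subst h
  constructor
  · rw [Nat.mul_add_div (by omega)]
    simp [Nat.div_eq_of_lt hr]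
  · rw [Nat.mul_add_mod]
    exact Nat.mod_eq_of_lt hr


lemma mem_intvl {M i p : ℕ} {a : Fin M} : a ∈ intvl M i p ↔ i ≤ a.val ∧ a.val ≤ i + p :=
  Iff.rfl

lemma hybrid_left' {n k : ℕ} (a : Fin (2^n * (k+1))) (t : Fin n) {Q : ℕ} (hQ : Q < 2^n)
    (hd : a.val / (k+1) = Q) : hybrid n k a (Fin.castAdd k t) = brgc n ⟨Q, hQ⟩ t := by
  have h2 : a.val / (k+1) < 2^n := by rw [hd]; exact hQ
  rw [hybrid_left a t h2]
  have hmk : (⟨a.val / (k+1), h2⟩ : Fin (2^n)) = ⟨Q, hQ⟩ := Fin.ext hd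
  rw [hmk]

lemma hybrid_right' {n k : ℕ} (a : Fin (2^n * (k+1))) (u : Fin k) {Q : ℕ} (hQ : Q < 2^n)
    (hd : a.val / (k+1) = Q) :
    hybrid n k a (Fin.natAdd n u) =
      if parityW (brgc n ⟨Q, hQ⟩) = false then decide (u.val < a.val % (k+1))
      else decide (a.val % (k+1) ≤ u.val) := by
  have h2 : a.val / (k+1) < 2^n := by rw [hd]; exact hQ
  rw [hybrid_right a u h2]
  have hmk : (⟨a.val / (k+1), h2⟩ : Fin (2^n)) = ⟨Q, hQ⟩ := Fin.ext hd
  rw [hmk]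

lemma brgc_parity_succ {n q : ℕ} (h1 : q < 2^n) (h2 : q + 1 < 2^n) :
    parityW (brgc n ⟨q+1, h2⟩) = ! parityW (brgc n ⟨q, h1⟩) := by
  rw [brgc_parity, brgc_parity]
  rcases Nat.even_or_odd q with he | he
  · have h0 : q % 2 = 0 := Nat.even_iff.mp he
    have h1' : (q+1) % 2 = 1 := by omega
    simp [h0, h1']
  · have h0 : q % 2 = 1 := Nat.odd_iff.mp he
    have h1' : (q+1) % 2 = 0 := by omega
    simp [h0, h1']

/-- The hybrid code `γ^h_{n,k}` is `k`-preserving. -/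
theorem hybrid_preserving (n k : ℕ) (hk : 1 ≤ k) (hnk : k ≤ n) :
    Preserving (hybrid n k) k := by
  intro i p hp hM
  have hk1 : 0 < k + 1 := by omega
  have hilt : i < 2^n * (k+1) := by omega
  have hqr : (k+1) * (i / (k+1)) + i % (k+1) = i := Nat.div_add_mod i (k+1)
  have hrk : i % (k+1) < k + 1 := Nat.mod_lt _ hk1
  have hq2 : i / (k+1) < 2^n := (Nat.div_lt_iff_lt_mul hk1).mpr (by omega)
  apply Set.Subset.antisymm
  · rintro y ⟨⟨c, rfl⟩, hres⟩
    refine ⟨c, mem_intvl.mpr ?_, rfl⟩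
    have hcqr : (k+1) * (c.val / (k+1)) + c.val % (k+1) = c.val := Nat.div_add_mod _ _
    have hrck : c.val % (k+1) < k + 1 := Nat.mod_lt _ hk1
    have hqc2 : c.val / (k+1) < 2^n := (Nat.div_lt_iff_lt_mul hk1).mpr (by have := c.isLt; omega)
    have key : ∀ (j : Fin (n+k)) (b : Bool),
        (∀ a : Fin (2^n*(k+1)), i ≤ a.val → a.val ≤ i + p → hybrid n k a j = b) →
        hybrid n k c j = b := by
      intro j b hall
      apply hres j b
      unfold extCW
      cases b with
      | false =>
        have hC1 : ¬ ∀ a ∈ intvl (2^n*(k+1)) i p, hybrid n k a j = true := by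
          intro hC
          have h0 := hC ⟨i, hilt⟩ (mem_intvl.mpr ⟨le_refl i, Nat.le_add_right i p⟩)
          have h0' := hall ⟨i, hilt⟩ (le_refl i) (Nat.le_add_right i p)
          rw [h0'] at h0
          exact Bool.false_ne_true h0
        rw [if_neg hC1, if_pos (fun a ha => hall a (mem_intvl.mp ha).1 (mem_intvl.mp ha).2)]
      | true =>
        rw [if_pos (fun a ha => hall a (mem_intvl.mp ha).1 (mem_intvl.mp ha).2)]
    by_cases hcase : i % (k+1) + p ≤ k
    · -- interval fits inside a single block
      have hQa : ∀ a : Fin (2^n*(k+1)), i ≤ a.val → a.val ≤ i + p →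
          a.val / (k+1) = i / (k+1) ∧ i % (k+1) ≤ a.val % (k+1) ∧
            a.val % (k+1) ≤ i % (k+1) + p := by
        intro a h1 h2
        have hb1 : a.val - i + i % (k+1) < k + 1 := by omega
        have hb2 : a.val = (k+1) * (i/(k+1)) + (a.val - i + i % (k+1)) := by omega
        obtain ⟨hd, hm⟩ := divmod_of_eq hb1 hb2
        exact ⟨hd, by omega, by omega⟩
      have hdc : c.val / (k+1) = i / (k+1) := by
        have hgc : brgc n ⟨c.val/(k+1), hqc2⟩ = brgc n ⟨i/(k+1), hq2⟩ := funext (fun t => by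
          have hv := key (Fin.castAdd k t) (brgc n ⟨i/(k+1), hq2⟩ t) (fun a h1 h2 => by
            rw [hybrid_left' a t hq2 (hQa a h1 h2).1])
          rw [hybrid_left' c t hqc2 rfl] at hv
          exact hv)
        exact congrArg Fin.val (brgc_inj n hgc)
      have hrc1 : i % (k+1) ≤ c.val % (k+1) := by
        by_cases hr0 : i % (k+1) = 0
        · omega
        · set u : Fin k := ⟨i % (k+1) - 1, by omega⟩ with hudef
          have huv : u.val = i % (k+1) - 1 := rfl
          by_cases hpar : parityW (brgc n ⟨i/(k+1), hq2⟩) = false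
          · have hv := key (Fin.natAdd n u) true (fun a h1 h2 => by
              obtain ⟨hd, hm1, hm2⟩ := hQa a h1 h2
              rw [hybrid_right' a u hq2 hd, if_pos hpar, decide_eq_true_eq]
              omega)
            rw [hybrid_right' c u hq2 hdc, if_pos hpar, decide_eq_true_eq] at hv
            omega
          · have hv := key (Fin.natAdd n u) false (fun a h1 h2 => by
              obtain ⟨hd, hm1, hm2⟩ := hQa a h1 h2
              rw [hybrid_right' a u hq2 hd, if_neg hpar, decide_eq_false_iff_not]
              omega)
            rw [hybrid_right' c u hq2 hdc, if_neg hpar, decide_eq_false_iff_not] at hv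
            omega
      have hrc2 : c.val % (k+1) ≤ i % (k+1) + p := by
        by_cases hrp : k ≤ i % (k+1) + p
        · omega
        · set u : Fin k := ⟨i % (k+1) + p, by omega⟩ with hudef
          have huv : u.val = i % (k+1) + p := rfl
          by_cases hpar : parityW (brgc n ⟨i/(k+1), hq2⟩) = false
          · have hv := key (Fin.natAdd n u) false (fun a h1 h2 => by
              obtain ⟨hd, hm1, hm2⟩ := hQa a h1 h2
              rw [hybrid_right' a u hq2 hd, if_pos hpar, decide_eq_false_iff_not]
              omega)
            rw [hybrid_right' c u hq2 hdc, if_pos hpar, decide_eq_false_iff_not] at hv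
            omega
          · have hv := key (Fin.natAdd n u) true (fun a h1 h2 => by
              obtain ⟨hd, hm1, hm2⟩ := hQa a h1 h2
              rw [hybrid_right' a u hq2 hd, if_neg hpar, decide_eq_true_eq]
              omega)
            rw [hybrid_right' c u hq2 hdc, if_neg hpar, decide_eq_true_eq] at hv
            omega
      rw [hdc] at hcqr
      omega
    · -- interval spans two consecutive blocks
      push_neg at hcase
      have hr1 : 1 ≤ i % (k+1) := by omega
      have e1 : (k+1) * (i/(k+1) + 1) = (k+1) * (i/(k+1)) + (k+1) := by ring
      have hq12 : i / (k+1) + 1 < 2^n := by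
        by_contra hcon
        push_neg at hcon
        have h2 : 2^n * (k+1) ≤ (i/(k+1) + 1) * (k+1) :=
          Nat.mul_le_mul_right _ hcon
        have h3 : (i/(k+1) + 1) * (k+1) = (k+1) * (i/(k+1) + 1) := by ring
        omega
      have hQa : ∀ a : Fin (2^n*(k+1)), i ≤ a.val → a.val ≤ i + p →
          (a.val / (k+1) = i / (k+1) ∧ i % (k+1) ≤ a.val % (k+1)) ∨
          (a.val / (k+1) = i / (k+1) + 1 ∧ a.val % (k+1) + (k+1) ≤ i % (k+1) + p) := by
        intro a h1 h2
        by_cases hc : a.val ≤ (k+1) * (i/(k+1)) + k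
        · left
          have hb1 : a.val - (k+1) * (i/(k+1)) < k + 1 := by omega
          have hb2 : a.val = (k+1) * (i/(k+1)) + (a.val - (k+1) * (i/(k+1))) := by omega
          obtain ⟨hd, hm⟩ := divmod_of_eq hb1 hb2
          exact ⟨hd, by omega⟩
        · right
          have hb1 : a.val - (k+1) * (i/(k+1) + 1) < k + 1 := by omega
          have hb2 : a.val = (k+1) * (i/(k+1) + 1) + (a.val - (k+1) * (i/(k+1) + 1)) := by omega
          obtain ⟨hd, hm⟩ := divmod_of_eq hb1 hb2
          exact ⟨hd, by omega⟩
      obtain ⟨t, htne, htag⟩ := brgc_succ_diff n (i/(k+1)) hq2 hq12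
      have hgc : ∀ j : Fin n, j ≠ t → brgc n ⟨c.val/(k+1), hqc2⟩ j = brgc n ⟨i/(k+1), hq2⟩ j := by
        intro j hj
        have hv := key (Fin.castAdd k j) (brgc n ⟨i/(k+1), hq2⟩ j) (fun a h1 h2 => by
          rcases hQa a h1 h2 with ⟨hd, _⟩ | ⟨hd, _⟩
          · rw [hybrid_left' a j hq2 hd]
          · rw [hybrid_left' a j hq12 hd]
            exact (htag j hj).symm)
        rw [hybrid_left' c j hqc2 rfl] at hv
        exact hv
      have hqc : c.val / (k+1) = i / (k+1) ∨ c.val / (k+1) = i / (k+1) + 1 := by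
        by_cases hct : brgc n ⟨c.val/(k+1), hqc2⟩ t = brgc n ⟨i/(k+1), hq2⟩ t
        · left
          have hfe : brgc n ⟨c.val/(k+1), hqc2⟩ = brgc n ⟨i/(k+1), hq2⟩ := funext (fun j => by
            by_cases hj : j = t
            · rw [hj]; exact hct
            · exact hgc j hj)
          exact congrArg Fin.val (brgc_inj n hfe)
        · right
          have hfe : brgc n ⟨c.val/(k+1), hqc2⟩ = brgc n ⟨i/(k+1) + 1, hq12⟩ := funext (fun j => by
            by_cases hj : j = t
            · subst hj
              have hbool : ∀ x y z : Bool, ¬ x = z → ¬ z = y → x = y := by decide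
              exact hbool _ _ _ hct htne
            · rw [hgc j hj]
              exact htag j hj)
          exact congrArg Fin.val (brgc_inj n hfe)
      have hpar1 := brgc_parity_succ hq2 hq12
      -- stable unary window: positions s ≤ u < r, where s + (k+1) = r + p
      have hstab : ∀ u : Fin k, i % (k+1) + p ≤ u.val + (k+1) → u.val < i % (k+1) →
          hybrid n k c (Fin.natAdd n u) =
            (if parityW (brgc n ⟨i/(k+1), hq2⟩) = false then true else false) := by
        intro u hu1 hu2
        apply key
        intro a h1 h2
        by_cases hpar : parityW (brgc n ⟨i/(k+1), hq2⟩) = false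
        · rw [if_pos hpar]
          rcases hQa a h1 h2 with ⟨hd, hra⟩ | ⟨hd, hra⟩
          · rw [hybrid_right' a u hq2 hd, if_pos hpar, decide_eq_true_eq]
            omega
          · rw [hybrid_right' a u hq12 hd, hpar1, hpar]
            simp only [Bool.not_false, if_neg (by simp : ¬ (true = false))]
            rw [decide_eq_true_eq]
            omega
        · rw [if_neg hpar]
          rcases hQa a h1 h2 with ⟨hd, hra⟩ | ⟨hd, hra⟩
          · rw [hybrid_right' a u hq2 hd, if_neg hpar, decide_eq_false_iff_not]
            omega
          · have hpt : parityW (brgc n ⟨i/(k+1), hq2⟩) = true := by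
              cases hpw : parityW (brgc n ⟨i/(k+1), hq2⟩)
              · exact absurd hpw hpar
              · rfl
            rw [hybrid_right' a u hq12 hd, hpar1, hpt]
            rw [if_pos (show (!true) = false from rfl), decide_eq_false_iff_not]
            omega
      rcases hqc with hdc | hdc
      · -- c lies in the lower block: show r ≤ rc
        set u : Fin k := ⟨i % (k+1) - 1, by omega⟩ with hudef
        have huv : u.val = i % (k+1) - 1 := rfl
        have hv := hstab u (by rw [huv]; omega) (by rw [huv]; omega)
        rw [hybrid_right' c u hq2 hdc] at hv
        rw [hdc] at hcqr
        by_cases hpar : parityW (brgc n ⟨i/(k+1), hq2⟩) = false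
        · rw [hpar, if_pos rfl, if_pos rfl, decide_eq_true_eq] at hv
          omega
        · have hpt : parityW (brgc n ⟨i/(k+1), hq2⟩) = true := by
            cases hpw : parityW (brgc n ⟨i/(k+1), hq2⟩)
            · exact absurd hpw hpar
            · rfl
          rw [hpt, if_neg (show ¬ true = false from by simp),
            if_neg (show ¬ true = false from by simp), decide_eq_false_iff_not] at hv
          omega
      · -- c lies in the upper block: show rc ≤ s
        set u : Fin k := ⟨i % (k+1) + p - (k+1), by omega⟩ with hudef
        have huv : u.val = i % (k+1) + p - (k+1) := rfl
        have hv := hstab u (by rw [huv]; omega) (by rw [huv]; omega)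
        rw [hybrid_right' c u hq12 hdc, hpar1] at hv
        rw [hdc] at hcqr
        by_cases hpar : parityW (brgc n ⟨i/(k+1), hq2⟩) = false
        · rw [hpar, if_neg (show ¬ (!false) = false from by simp), if_pos rfl,
            decide_eq_true_eq] at hv
          omega
        · have hpt : parityW (brgc n ⟨i/(k+1), hq2⟩) = true := by
            cases hpw : parityW (brgc n ⟨i/(k+1), hq2⟩)
            · exact absurd hpw hpar
            · rfl
          rw [hpt, if_pos (show (!true) = false from rfl),
            if_neg (show ¬ true = false from by simp), decide_eq_false_iff_not] at hv
          omega
  · rintro y ⟨c, hc, rfl⟩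
    exact ⟨⟨c, rfl⟩, mem_res_extCW _ _ hc⟩
end
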